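/- arXiv:1111.2324 — 5 statements merged into one kernel-verified Lean document; each statement's English description precedes it below -/
import Mathlib

section
/- A quiver J is injective with respect to the class of all monomorphisms in the category of quivers if and only if J is loaded and has at least one vertex. -/
open CategoryTheory

/-- A quiver (directed multigraph): vertices, edges, source and target maps. -/
structure Quiv' where
  V : Type
  E : Type
  s : E → V
  t : E → V

/-- A quiver homomorphism: a vertex map and an edge map commuting with source/target. -/
@[ext]
structure QuivHom (G H : Quiv') where
  vMap : G.V → H.V
  eMap : G.E → H.E
  comm_s : ∀ e, vMap (G.s e) = H.s (eMap e)
  comm_t : ∀ e, vMap (G.t e) = H.t (eMap e)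

def QuivHom.id' (G : Quiv') : QuivHom G G where
  vMap := id
  eMap := id
  comm_s _ := rfl
  comm_t _ := rfl

def QuivHom.comp' {G H K : Quiv'} (f : QuivHom G H) (g : QuivHom H K) : QuivHom G K where
  vMap := g.vMap ∘ f.vMap
  eMap := g.eMap ∘ f.eMap
  comm_s e := by simp only [Function.comp_apply, f.comm_s, g.comm_s]
  comm_t e := by simp only [Function.comp_apply, f.comm_t, g.comm_t]

instance : Category Quiv' where
  Hom := QuivHom
  id := QuivHom.id'
  comp := QuivHom.comp'
  id_comp f := rfl
  comp_id f := rfl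
  assoc f g h := rfl

/-- `I(S)`: the empty quiver (independent set of vertices) on `S`. -/
def IQ (S : Type) : Quiv' := ⟨S, Empty, Empty.elim, Empty.elim⟩

/-- `M(S)`: the independent set of edges on `S`. -/
def MQ (S : Type) : Quiv' := ⟨Fin 2 × S, S, fun x => (0, x), fun x => (1, x)⟩

/-- `K(S)`: the complete (full) quiver on `S`. -/
def KQ (S : Type) : Quiv' := ⟨S, S × S, Prod.fst, Prod.snd⟩

/-- `B(S)`: the bouquet on `S`. -/
def BQ (S : Type) : Quiv' := ⟨PUnit, S, fun _ => PUnit.unit, fun _ => PUnit.unit⟩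

/-- The vertex functor `V : Quiv → Set`. -/
def Vf : Quiv' ⥤ Type where
  obj G := G.V
  map φ := TypeCat.ofHom φ.vMap
  map_id _ := rfl
  map_comp _ _ := rfl

/-- The edge functor `E : Quiv → Set`. -/
def Ef : Quiv' ⥤ Type where
  obj G := G.E
  map φ := TypeCat.ofHom φ.eMap
  map_id _ := rfl
  map_comp _ _ := rfl

/-- The empty-quiver functor `I : Set → Quiv`. -/
def If : Type ⥤ Quiv' where
  obj := IQ
  map f := ⟨f, id, fun e => e.elim, fun e => e.elim⟩
  map_id _ := rfl
  map_comp _ _ := rfl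

/-- The independent-edges functor `M : Set → Quiv`. -/
def Mf : Type ⥤ Quiv' where
  obj := MQ
  map f := ⟨Prod.map id f, f, fun _ => rfl, fun _ => rfl⟩
  map_id _ := rfl
  map_comp _ _ := rfl

/-- The complete-quiver functor `K : Set → Quiv`. -/
def Kf : Type ⥤ Quiv' where
  obj := KQ
  map f := ⟨f, Prod.map f f, fun _ => rfl, fun _ => rfl⟩
  map_id _ := rfl
  map_comp _ _ := rfl

/-- The bouquet functor `B : Set → Quiv`. -/
def Bf : Type ⥤ Quiv' where
  obj := BQ
  map f := ⟨id, f, fun _ => rfl, fun _ => rfl⟩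
  map_id _ := rfl
  map_comp _ _ := rfl

/-- The set of edges of `G` with source `v` and target `w`. -/
def edgesBetween (G : Quiv') (v w : G.V) : Set G.E := {e | G.s e = v ∧ G.t e = w}

/-- A quiver is loaded if between any two vertices there is an edge. -/
def Loaded (J : Quiv') : Prop := ∀ v w : J.V, ∃ e : J.E, J.s e = v ∧ J.t e = w

/-- `J` is injective with respect to the morphism `φ`. -/
def InjectiveWrt (J : Quiv') {A B : Quiv'} (φ : A ⟶ B) : Prop :=
  ∀ ψ : A ⟶ J, ∃ ψ' : B ⟶ J, φ ≫ ψ' = ψ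

/-- `J` is injective with respect to all monomorphisms. -/
def MonoInjective (J : Quiv') : Prop :=
  ∀ ⦃A B : Quiv'⦄ (φ : A ⟶ B), Mono φ → ∀ ψ : A ⟶ J, ∃ ψ' : B ⟶ J, φ ≫ ψ' = ψ

/-- A monomorphism `φ` is mono-essential if composing with it reflects monicity. -/
def MonoEssential {D C : Quiv'} (φ : D ⟶ C) : Prop :=
  Mono φ ∧ ∀ ⦃A : Quiv'⦄ (α : C ⟶ A), Mono (φ ≫ α) → Mono α

/-- `P` is projective with respect to all epimorphisms. -/
def EpiProjective (P : Quiv') : Prop :=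
  ∀ ⦃A B : Quiv'⦄ (φ : A ⟶ B), Epi φ → ∀ ψ : P ⟶ B, ∃ γ : P ⟶ A, γ ≫ φ = ψ

/-- An epimorphism `φ` is epi-coessential if composing with it reflects epicity. -/
def EpiCoessential {G H : Quiv'} (φ : G ⟶ H) : Prop :=
  Epi φ ∧ ∀ ⦃A : Quiv'⦄ (α : A ⟶ G), Epi (α ≫ φ) → Epi α

/-- Disjoint union of two quivers. -/
def DU (G H : Quiv') : Quiv' :=
  ⟨G.V ⊕ H.V, G.E ⊕ H.E, Sum.map G.s H.s, Sum.map G.t H.t⟩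

/-- The loading of a quiver: add one edge between each pair of vertices having none. -/
def Loading (D : Quiv') : Quiv' where
  V := D.V
  E := D.E ⊕ {p : D.V × D.V // edgesBetween D p.1 p.2 = ∅}
  s := Sum.elim D.s (fun p => p.val.1)
  t := Sum.elim D.t (fun p => p.val.2)

/-- The canonical inclusion of a quiver into its loading. -/
def loadInc (D : Quiv') : D ⟶ Loading D where
  vMap := id
  eMap := Sum.inl
  comm_s _ := rfl
  comm_t _ := rfl

/-- A vertex is independent if it is incident to no edge. -/
def Indep (G : Quiv') (v : G.V) : Prop := (∀ e, G.s e ≠ v) ∧ (∀ e, G.t e ≠ v)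

/-- The explosion of a quiver `G`: `I(indep G) ⊔ M(E(G))`. -/
def Explosion (G : Quiv') : Quiv' := DU (IQ {v : G.V // Indep G v}) (MQ G.E)

/-- The covering map from the explosion of `G` onto `G`. -/
def coverMap (G : Quiv') : Explosion G ⟶ G where
  vMap := Sum.elim Subtype.val (fun p => if p.1 = 0 then G.s p.2 else G.t p.2)
  eMap := Sum.elim Empty.elim id
  comm_s e := by
    cases e with
    | inl e => exact e.elim
    | inr e => rfl
  comm_t e := by
    cases e with
    | inl e => exact e.elim
    | inr e => rfl

/-!
A quiver morphism is monic exactly when it is injective on vertices and on edges (test it against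
the one-vertex quiver and the one-edge quiver). Along such a monomorphism, a map into a loaded
quiver `J` with a vertex `j₀` extends: new vertices go to `j₀`, and a new edge goes to some edge of
`J` between the images of its ends. Conversely, extending along the inclusion of the two endpoints
of a single edge yields an edge between any two prescribed vertices, and extending along the
inclusion of the empty quiver into a point yields a vertex.
-/

def IQ.lift {G : Quiv'} {S : Type} (f : S → G.V) : IQ S ⟶ G :=
  ⟨f, Empty.elim, fun e => e.elim, fun e => e.elim⟩

theorem IQ.hom_ext {G : Quiv'} {S : Type} {f g : IQ S ⟶ G} (h : f.vMap = g.vMap) : f = g :=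
  QuivHom.ext h (funext fun e => e.elim)

theorem MQ.hom_ext {G : Quiv'} {S : Type} {f g : MQ S ⟶ G} (h : f.eMap = g.eMap) : f = g := by
  refine QuivHom.ext (funext fun ⟨i, x⟩ => ?_) h
  fin_cases i
  · exact (f.comm_s x).trans ((congrFun h x ▸ g.comm_s x).symm)
  · exact (f.comm_t x).trans ((congrFun h x ▸ g.comm_t x).symm)

def MQ.ofEdge {G : Quiv'} (e : G.E) : MQ PUnit ⟶ G where
  vMap p := if p.1 = 0 then G.s e else G.t e
  eMap _ := e
  comm_s _ := if_pos rfl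
  comm_t _ := if_neg (by decide : (1 : Fin 2) ≠ 0)

theorem QuivHom.mono_iff {A B : Quiv'} (φ : A ⟶ B) :
    Mono φ ↔ Function.Injective φ.vMap ∧ Function.Injective φ.eMap := by
  constructor
  · intro hφ
    refine ⟨fun a₁ a₂ h => ?_, fun e₁ e₂ h => ?_⟩
    · have hcomp : IQ.lift (fun _ : PUnit => a₁) ≫ φ = IQ.lift (fun _ => a₂) ≫ φ :=
        IQ.hom_ext (funext fun _ => h)
      exact congrArg (fun g : IQ PUnit ⟶ A => g.vMap PUnit.unit) (cancel_mono φ |>.mp hcomp)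
    · have hcomp : MQ.ofEdge e₁ ≫ φ = MQ.ofEdge e₂ ≫ φ :=
        MQ.hom_ext (funext fun _ => h)
      exact congrArg (fun g : MQ PUnit ⟶ A => g.eMap PUnit.unit) (cancel_mono φ |>.mp hcomp)
  · rintro ⟨hv, he⟩
    refine ⟨fun g₁ g₂ h => QuivHom.ext ?_ ?_⟩
    · exact hv.comp_left (congrArg QuivHom.vMap h)
    · exact he.comp_left (congrArg QuivHom.eMap h)

theorem IQ.mono_lift {G : Quiv'} {S : Type} {f : S → G.V} (hf : Function.Injective f) :
    Mono (IQ.lift (G := G) f) :=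
  (QuivHom.mono_iff _).mpr ⟨hf, fun e => e.elim⟩

theorem MonoInjective.loaded {J : Quiv'} (hJ : MonoInjective J) : Loaded J := by
  intro v w
  let ends : IQ (Fin 2) ⟶ MQ PUnit := IQ.lift fun i => (i, PUnit.unit)
  have hends : Mono ends := IQ.mono_lift fun _ _ h => congrArg Prod.fst h
  obtain ⟨ψ, hψ⟩ := hJ ends hends (IQ.lift ![v, w])
  have hvertex (i : Fin 2) : ψ.vMap (i, PUnit.unit) = ![v, w] i :=
    congrFun (congrArg QuivHom.vMap hψ) i
  exact ⟨ψ.eMap PUnit.unit, (ψ.comm_s _).symm.trans (hvertex 0),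
    (ψ.comm_t _).symm.trans (hvertex 1)⟩

theorem MonoInjective.nonempty {J : Quiv'} (hJ : MonoInjective J) : Nonempty J.V := by
  obtain ⟨ψ, -⟩ := hJ (IQ.lift (G := IQ PUnit) Empty.elim)
    (IQ.mono_lift fun e => e.elim) (IQ.lift Empty.elim)
  exact ⟨ψ.vMap PUnit.unit⟩

theorem Loaded.monoInjective {J : Quiv'} (hJ : Loaded J) (j₀ : J.V) : MonoInjective J := by
  intro A B φ hφ ψ
  obtain ⟨hv, he⟩ := (QuivHom.mono_iff φ).mp hφ
  let vMap : B.V → J.V := Function.extend φ.vMap ψ.vMap fun _ => j₀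
  have hvMap (a : A.V) : vMap (φ.vMap a) = ψ.vMap a := hv.extend_apply _ _ a
  choose edge hedge_s hedge_t using hJ
  let eMap : B.E → J.E :=
    Function.extend φ.eMap ψ.eMap fun f => edge (vMap (B.s f)) (vMap (B.t f))
  have heMap (e : A.E) : eMap (φ.eMap e) = ψ.eMap e := he.extend_apply _ _ e
  refine ⟨⟨vMap, eMap, fun f => ?_, fun f => ?_⟩, QuivHom.ext (funext hvMap) (funext heMap)⟩
  · by_cases hf : ∃ e, φ.eMap e = f
    · obtain ⟨e, rfl⟩ := hf
      rw [heMap, ← φ.comm_s, hvMap, ψ.comm_s]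
    · simp only [eMap, Function.extend_apply' _ _ _ hf, hedge_s]
  · by_cases hf : ∃ e, φ.eMap e = f
    · obtain ⟨e, rfl⟩ := hf
      rw [heMap, ← φ.comm_t, hvMap, ψ.comm_t]
    · simp only [eMap, Function.extend_apply' _ _ _ hf, hedge_t]

theorem mono_injective_iff (J : Quiv') :
    MonoInjective J ↔ Loaded J ∧ Nonempty J.V :=
  ⟨fun hJ => ⟨hJ.loaded, hJ.nonempty⟩, fun ⟨hJ, ⟨j₀⟩⟩ => hJ.monoInjective j₀⟩
end

section
/- A quiver map φ from the empty quiver I(∅) to a quiver C is mono-essential if and only if C has at most one vertex and at most one edge. -/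
open CategoryTheory

/-! Probing a quiver with one vertex (resp. one edge) shows that the monomorphisms of quivers
are exactly the maps injective on vertices and on edges. The terminal quiver has one vertex and
one edge, and the map to it becomes monic after precomposing with any map out of the empty
quiver; so mono-essentiality forces it to be monic, i.e. `C` to have at most one vertex and
at most one edge. Conversely, every map out of such a `C` is injective, hence monic. -/

namespace QuivHom

def ofVertex {C : Quiv'} (v : C.V) : IQ PUnit ⟶ C :=
  ⟨fun _ => v, Empty.elim, fun e => e.elim, fun e => e.elim⟩

def ofEdge {C : Quiv'} (e : C.E) : MQ PUnit ⟶ C :=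
  ⟨fun p => if p.1 = 0 then C.s e else C.t e, fun _ => e, fun _ => rfl, fun _ => rfl⟩

theorem mono_iff_injective {C A : Quiv'} (α : C ⟶ A) :
    Mono α ↔ Function.Injective α.vMap ∧ Function.Injective α.eMap := by
  constructor
  · intro _
    constructor
    · intro v w hvw
      have h : ofVertex v ≫ α = ofVertex w ≫ α := by
        apply QuivHom.ext
        · exact funext fun _ => hvw
        · funext x
          exact x.elim
      exact congrFun (congrArg QuivHom.vMap ((cancel_mono α).mp h)) PUnit.unit
    · intro e e' hee'
      have h : ofEdge e ≫ α = ofEdge e' ≫ α := by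
        apply QuivHom.ext
        · funext p
          change α.vMap (if p.1 = 0 then C.s e else C.t e) =
            α.vMap (if p.1 = 0 then C.s e' else C.t e')
          split_ifs
          · rw [α.comm_s, α.comm_s, hee']
          · rw [α.comm_t, α.comm_t, hee']
        · exact funext fun _ => hee'
      exact congrFun (congrArg QuivHom.eMap ((cancel_mono α).mp h)) PUnit.unit
  · rintro ⟨hV, hE⟩
    refine ⟨fun g h hgh => ?_⟩
    apply QuivHom.ext
    · funext x
      exact hV (congrFun (congrArg QuivHom.vMap hgh) x)
    · funext x
      exact hE (congrFun (congrArg QuivHom.eMap hgh) x)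

theorem mono_from_IQ_empty {C : Quiv'} (φ : IQ Empty ⟶ C) : Mono φ :=
  (mono_iff_injective φ).2 ⟨fun v => v.elim, fun e => e.elim⟩

end QuivHom

def toBouquetUnit (C : Quiv') : C ⟶ BQ PUnit :=
  ⟨fun _ => PUnit.unit, fun _ => PUnit.unit, fun _ => rfl, fun _ => rfl⟩

theorem mono_essential_from_empty_iff (C : Quiv') (φ : IQ Empty ⟶ C) :
    MonoEssential φ ↔ Subsingleton C.V ∧ Subsingleton C.E := by
  constructor
  · rintro ⟨-, reflects_mono⟩
    have h := reflects_mono (toBouquetUnit C) (QuivHom.mono_from_IQ_empty _)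
    obtain ⟨hV, hE⟩ := (QuivHom.mono_iff_injective _).1 h
    exact ⟨hV.subsingleton (β := PUnit), hE.subsingleton (β := PUnit)⟩
  · rintro ⟨_, _⟩
    exact ⟨QuivHom.mono_from_IQ_empty φ, fun _ α _ => (QuivHom.mono_iff_injective α).2
      ⟨Function.injective_of_subsingleton _, Function.injective_of_subsingleton _⟩⟩
end

section
/- Let φ : D → C be a monic quiver map with V(D) nonempty. Then φ is mono-essential if and only if: (1) the vertex map V(φ) is bijective; (2) whenever edges_D(v,w) ≠ ∅, the image under E(φ) of edges_D(v,w) equals edges_C(V(φ)(v), V(φ)(w)); and (3) whenever edges_D(v,w) = ∅, the set edges_C(V(φ)(v), V(φ)(w)) has at most one element. -/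
open CategoryTheory

/-! A quiver map is monic iff it is injective on vertices and on edges. If `φ` is mono-essential,
then no vertex of `C` lies outside its image, since such a vertex could be merged with any other
while `φ ≫ α` stays injective; for the same reason an edge outside the image of `φ` has no
parallel edge. Conversely, if `φ` is onto on vertices and edges outside its image have no parallel
edges, then `φ ≫ α` monic forces `α` to be injective on vertices, so `α` can only identify
parallel edges, and those are either equal or both in the image of `φ`, where `φ ≫ α` is
injective. Conditions (2) and (3) are this edge condition read off between pairs of vertices. -/

open Function Set

lemma eq_of_injective_update_id {X : Type*} [DecidableEq X] {a b : X}
    (h : Injective (update id a b)) : a = b := by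
  by_contra hab
  exact hab (h (by rw [update_self, update_of_ne (Ne.symm hab)]; rfl))

lemma injOn_update_id {X : Type*} [DecidableEq X] {a b : X} {s : Set X} (ha : a ∉ s) :
    InjOn (update id a b) s :=
  injOn_id s |>.congr fun _ hx => (update_of_ne (ne_of_mem_of_not_mem hx ha) _ _).symm

namespace Quiv'

def vertexHom (G : Quiv') (v : G.V) : IQ PUnit ⟶ G :=
  ⟨fun _ => v, Empty.elim, fun e => e.elim, fun e => e.elim⟩

def edgeHom (G : Quiv') (e : G.E) : MQ PUnit ⟶ G :=
  ⟨fun p => ![G.s e, G.t e] p.1, fun _ => e, fun _ => rfl, fun _ => rfl⟩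

lemma vertexHom_comp {G H : Quiv'} (f : G ⟶ H) (v : G.V) :
    vertexHom G v ≫ f = vertexHom H (f.vMap v) :=
  QuivHom.ext rfl (funext fun e => e.elim)

lemma edgeHom_comp {G H : Quiv'} (f : G ⟶ H) (e : G.E) :
    edgeHom G e ≫ f = edgeHom H (f.eMap e) := by
  refine QuivHom.ext (funext fun ⟨i, _⟩ => ?_) rfl
  fin_cases i
  exacts [f.comm_s e, f.comm_t e]

theorem mono_iff_vMap_eMap_injective {G H : Quiv'} (f : G ⟶ H) :
    Mono f ↔ Injective f.vMap ∧ Injective f.eMap := by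
  refine ⟨fun hf => ⟨fun v₁ v₂ h => ?_, fun e₁ e₂ h => ?_⟩, fun ⟨hv, he⟩ => ⟨fun g₁ g₂ h => ?_⟩⟩
  · have := (cancel_mono f).1 (by rw [vertexHom_comp, vertexHom_comp, h] :
      vertexHom G v₁ ≫ f = vertexHom G v₂ ≫ f)
    exact congrFun (congrArg QuivHom.vMap this) PUnit.unit
  · have := (cancel_mono f).1 (by rw [edgeHom_comp, edgeHom_comp, h] :
      edgeHom G e₁ ≫ f = edgeHom G e₂ ≫ f)
    exact congrFun (congrArg QuivHom.eMap this) PUnit.unit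
  · exact QuivHom.ext (funext fun x => hv (congrFun (congrArg QuivHom.vMap h) x))
      (funext fun x => he (congrFun (congrArg QuivHom.eMap h) x))

open scoped Classical in
noncomputable def mergeVertex (G : Quiv') (a b : G.V) : Quiv' :=
  ⟨G.V, G.E, update id a b ∘ G.s, update id a b ∘ G.t⟩

open scoped Classical in
noncomputable def mergeVertexHom (G : Quiv') (a b : G.V) : G ⟶ G.mergeVertex a b :=
  ⟨update id a b, id, fun _ => rfl, fun _ => rfl⟩

open scoped Classical in
noncomputable def mergeEdgeHom (G : Quiv') {a b : G.E} (hs : G.s a = G.s b) (ht : G.t a = G.t b) :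
    G ⟶ G where
  vMap := id
  eMap := update id a b
  comm_s e := by
    by_cases h : e = a
    · subst h; simp [hs]
    · simp [h]
  comm_t e := by
    by_cases h : e = a
    · subst h; simp [ht]
    · simp [h]

end Quiv'

open Quiv'

def NoParallelOffRange {D C : Quiv'} (φ : D ⟶ C) : Prop :=
  ∀ ⦃e e' : C.E⦄, C.s e = C.s e' → C.t e = C.t e' → e ∉ range φ.eMap → e = e'

namespace MonoEssential

variable {D C : Quiv'} {φ : D ⟶ C}

lemma mono_of_injOn_range (h : MonoEssential φ) {A : Quiv'} (α : C ⟶ A)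
    (hv : InjOn α.vMap (range φ.vMap)) (he : InjOn α.eMap (range φ.eMap)) : Mono α := by
  obtain ⟨hφv, hφe⟩ := (mono_iff_vMap_eMap_injective φ).1 h.1
  exact h.2 α <| (mono_iff_vMap_eMap_injective _).2
    ⟨(hv.injective_iff _ subset_rfl).2 hφv, (he.injective_iff _ subset_rfl).2 hφe⟩

lemma surjective_vMap (h : MonoEssential φ) [Nonempty D.V] : Surjective φ.vMap := by
  classical
  intro c
  by_contra hc
  obtain ⟨d⟩ := ‹Nonempty D.V›
  have hmono := h.mono_of_injOn_range (C.mergeVertexHom c (φ.vMap d)) (injOn_update_id hc)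
    (injOn_id _)
  exact hc ⟨d, (eq_of_injective_update_id ((mono_iff_vMap_eMap_injective _).1 hmono).1).symm⟩

lemma noParallelOffRange (h : MonoEssential φ) : NoParallelOffRange φ := by
  classical
  intro e e' hs ht he
  have hmono := h.mono_of_injOn_range (C.mergeEdgeHom hs ht) (injOn_id _) (injOn_update_id he)
  exact eq_of_injective_update_id ((mono_iff_vMap_eMap_injective _).1 hmono).2

end MonoEssential

lemma QuivHom.map_mem_edgesBetween_iff {G H : Quiv'} (f : G ⟶ H) (hf : Injective f.vMap)
    {v w : G.V} {d : G.E} :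
    f.eMap d ∈ edgesBetween H (f.vMap v) (f.vMap w) ↔ d ∈ edgesBetween G v w := by
  simp only [edgesBetween, mem_ofPred_eq, ← f.comm_s, ← f.comm_t, hf.eq_iff]

lemma QuivHom.image_edgesBetween_subset {G H : Quiv'} (f : G ⟶ H) (v w : G.V) :
    f.eMap '' edgesBetween G v w ⊆ edgesBetween H (f.vMap v) (f.vMap w) := by
  rintro _ ⟨d, ⟨rfl, rfl⟩, rfl⟩
  exact ⟨(f.comm_s d).symm, (f.comm_t d).symm⟩

section

variable {D C : Quiv'} {φ : D ⟶ C}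

lemma monoEssential_of_surjective (hφ : Mono φ) (hsurj : Surjective φ.vMap)
    (hpar : NoParallelOffRange φ) : MonoEssential φ := by
  refine ⟨hφ, fun A α hmono => ?_⟩
  obtain ⟨hv, he⟩ := (mono_iff_vMap_eMap_injective _).1 hmono
  have hαv : Injective α.vMap := by
    intro c₁ c₂ h
    obtain ⟨d₁, rfl⟩ := hsurj c₁
    obtain ⟨d₂, rfl⟩ := hsurj c₂
    exact congrArg φ.vMap (hv h)
  refine (mono_iff_vMap_eMap_injective α).2 ⟨hαv, fun e₁ e₂ h => ?_⟩
  have hs : C.s e₁ = C.s e₂ := hαv (by rw [α.comm_s, α.comm_s, h])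
  have ht : C.t e₁ = C.t e₂ := hαv (by rw [α.comm_t, α.comm_t, h])
  by_cases h₁ : e₁ ∈ range φ.eMap
  · by_cases h₂ : e₂ ∈ range φ.eMap
    · obtain ⟨d₁, rfl⟩ := h₁
      obtain ⟨d₂, rfl⟩ := h₂
      exact congrArg φ.eMap (he h)
    · exact (hpar hs.symm ht.symm h₂).symm
  · exact hpar hs ht h₁

lemma noParallelOffRange_iff (hinj : Injective φ.vMap) (hsurj : Surjective φ.vMap) :
    NoParallelOffRange φ ↔
      (∀ v w : D.V, (edgesBetween D v w).Nonempty →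
        φ.eMap '' edgesBetween D v w = edgesBetween C (φ.vMap v) (φ.vMap w)) ∧
      (∀ v w : D.V, edgesBetween D v w = ∅ →
        (edgesBetween C (φ.vMap v) (φ.vMap w)).Subsingleton) := by
  refine ⟨fun hpar => ⟨?_, ?_⟩, fun ⟨himage, hsub⟩ => ?_⟩
  · rintro v w ⟨d, hd⟩
    refine (φ.image_edgesBetween_subset v w).antisymm fun e he => ?_
    by_contra hnot
    have hoff : e ∉ range φ.eMap := fun ⟨d', hd'⟩ =>
      hnot ⟨d', (φ.map_mem_edgesBetween_iff hinj).1 (hd' ▸ he), hd'⟩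
    have hφd := (φ.map_mem_edgesBetween_iff hinj).2 hd
    exact hoff ⟨d, (hpar (he.1.trans hφd.1.symm) (he.2.trans hφd.2.symm) hoff).symm⟩
  · intro v w hempty e₁ he₁ e₂ he₂
    refine hpar (he₁.1.trans he₂.1.symm) (he₁.2.trans he₂.2.symm) fun ⟨d, hd⟩ => ?_
    have := (φ.map_mem_edgesBetween_iff hinj).1 (hd ▸ he₁)
    rwa [hempty] at this
  · intro e e' hs ht he
    obtain ⟨v, hv⟩ := hsurj (C.s e)
    obtain ⟨w, hw⟩ := hsurj (C.t e)
    have hmem : e ∈ edgesBetween C (φ.vMap v) (φ.vMap w) := ⟨hv.symm, hw.symm⟩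
    rcases (edgesBetween D v w).eq_empty_or_nonempty with hempty | hne
    · exact hsub v w hempty hmem ⟨hs ▸ hv.symm, ht ▸ hw.symm⟩
    · rw [← himage v w hne] at hmem
      obtain ⟨d, -, rfl⟩ := hmem
      exact absurd ⟨d, rfl⟩ he

end

theorem mono_essential_iff (D C : Quiv') (φ : D ⟶ C) (hφ : CategoryTheory.Mono φ)
    (hD : Nonempty D.V) :
    MonoEssential φ ↔
      Function.Bijective φ.vMap ∧
      (∀ v w : D.V, (edgesBetween D v w).Nonempty →
        φ.eMap '' edgesBetween D v w = edgesBetween C (φ.vMap v) (φ.vMap w)) ∧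
      (∀ v w : D.V, edgesBetween D v w = ∅ →
        (edgesBetween C (φ.vMap v) (φ.vMap w)).Subsingleton) := by
  have hinj := ((mono_iff_vMap_eMap_injective φ).1 hφ).1
  constructor
  · intro h
    have hsurj := h.surjective_vMap
    exact ⟨⟨hinj, hsurj⟩, (noParallelOffRange_iff hinj hsurj).1 h.noParallelOffRange⟩
  · rintro ⟨⟨-, hsurj⟩, hedges⟩
    exact monoEssential_of_surjective hφ hsurj ((noParallelOffRange_iff hinj hsurj).2 hedges)
end

section
/- An epic quiver map φ : G → H is epi-coessential if and only if: (1) the edge map E(φ) is bijective; (2) φ maps independent vertices of G to independent vertices of H; and (3) every independent vertex of H has a unique independent-vertex preimage in G. -/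
open CategoryTheory

/-!
Epicity in `Quiv` is surjectivity on vertices and edges. If `φ` is epi-coessential, deleting
from `G` an edge or an independent vertex gives a proper subquiver whose inclusion is not epic,
so its composite with `φ` must miss something: hence `φ` is injective on edges and an
independent vertex is the only preimage of its image, which gives the three conditions.
Conversely, if `α ≫ φ` is epic then `α` hits every edge (injectivity of `E(φ)`), hence every
non-independent vertex, and the conditions on independent vertices force it to hit those too.
-/

section Epi

variable {G H : Quiv'}

def toKQ {S : Type} (f : H.V → S) : H ⟶ KQ S :=
  ⟨f, fun e => (f (H.s e), f (H.t e)), fun _ => rfl, fun _ => rfl⟩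

def toBQ {S : Type} (f : H.E → S) : H ⟶ BQ S :=
  ⟨fun _ => PUnit.unit, f, fun _ => rfl, fun _ => rfl⟩

lemma comp_toKQ {S : Type} (φ : G ⟶ H) (f : H.V → S) : φ ≫ toKQ f = toKQ (f ∘ φ.vMap) :=
  QuivHom.ext rfl <| funext fun e => by
    change (f (H.s (φ.eMap e)), f (H.t (φ.eMap e))) = (f (φ.vMap (G.s e)), f (φ.vMap (G.t e)))
    rw [φ.comm_s, φ.comm_t]

lemma comp_toBQ {S : Type} (φ : G ⟶ H) (f : H.E → S) : φ ≫ toBQ f = toBQ (f ∘ φ.eMap) := rfl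

theorem QuivHom.epi_iff_surjective (φ : G ⟶ H) :
    Epi φ ↔ Function.Surjective φ.vMap ∧ Function.Surjective φ.eMap := by
  constructor
  · intro hφ
    refine ⟨Function.surjective_of_right_cancellable_Prop fun g₁ g₂ h => ?_,
      Function.surjective_of_right_cancellable_Prop fun g₁ g₂ h => ?_⟩
    · have := (cancel_epi φ).1 (show φ ≫ toKQ g₁ = φ ≫ toKQ g₂ by rw [comp_toKQ, comp_toKQ, h])
      exact congrArg QuivHom.vMap this
    · have := (cancel_epi φ).1 (show φ ≫ toBQ g₁ = φ ≫ toBQ g₂ by rw [comp_toBQ, comp_toBQ, h])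
      exact congrArg QuivHom.eMap this
  · rintro ⟨hv, he⟩
    refine ⟨fun ψ₁ ψ₂ h => QuivHom.ext ?_ ?_⟩
    · exact hv.injective_comp_right (congrArg QuivHom.vMap h)
    · exact he.injective_comp_right (congrArg QuivHom.eMap h)

end Epi

theorem Indep.of_vMap {G H : Quiv'} (φ : G ⟶ H) {v : G.V} (h : Indep H (φ.vMap v)) :
    Indep G v :=
  ⟨fun e he => h.1 (φ.eMap e) (by rw [← φ.comm_s, he]),
    fun e he => h.2 (φ.eMap e) (by rw [← φ.comm_t, he])⟩

theorem exists_vMap_eq_of_not_indep {A G : Quiv'} (α : A ⟶ G)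
    (hα : Function.Surjective α.eMap) {v : G.V} (hv : ¬ Indep G v) : ∃ a, α.vMap a = v := by
  simp only [Indep, not_and_or, not_forall, not_not] at hv
  rcases hv with ⟨e, he⟩ | ⟨e, he⟩ <;> obtain ⟨a, rfl⟩ := hα e
  · exact ⟨A.s a, (α.comm_s a).trans he⟩
  · exact ⟨A.t a, (α.comm_t a).trans he⟩

namespace Quiv'

variable (G : Quiv')

def eraseEdge (e : G.E) : Quiv' := ⟨G.V, {f // f ≠ e}, fun f => G.s f, fun f => G.t f⟩

def eraseEdgeInc (e : G.E) : G.eraseEdge e ⟶ G := ⟨id, Subtype.val, fun _ => rfl, fun _ => rfl⟩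

theorem not_epi_eraseEdgeInc (e : G.E) : ¬ Epi (G.eraseEdgeInc e) := fun h =>
  let ⟨f, hf⟩ := ((QuivHom.epi_iff_surjective _).1 h).2 e
  f.2 hf

def eraseVertex {v : G.V} (hv : Indep G v) : Quiv' :=
  ⟨{u // u ≠ v}, G.E, fun e => ⟨G.s e, hv.1 e⟩, fun e => ⟨G.t e, hv.2 e⟩⟩

def eraseVertexInc {v : G.V} (hv : Indep G v) : G.eraseVertex hv ⟶ G :=
  ⟨Subtype.val, id, fun _ => rfl, fun _ => rfl⟩

theorem not_epi_eraseVertexInc {v : G.V} (hv : Indep G v) : ¬ Epi (G.eraseVertexInc hv) :=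
  fun h =>
  let ⟨u, hu⟩ := ((QuivHom.epi_iff_surjective _).1 h).1 v
  u.2 hu

end Quiv'

namespace EpiCoessential

variable {G H : Quiv'} {φ : G ⟶ H}

theorem eMap_injective (hφ : EpiCoessential φ) : Function.Injective φ.eMap := by
  intro e₁ e₂ he
  by_contra hne
  obtain ⟨hV, hE⟩ := (QuivHom.epi_iff_surjective φ).1 hφ.1
  apply G.not_epi_eraseEdgeInc e₂
  refine hφ.2 _ ((QuivHom.epi_iff_surjective _).2 ⟨hV, fun f => ?_⟩)
  obtain ⟨e, rfl⟩ := hE f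
  by_cases he₂ : e = e₂
  · exact ⟨⟨e₁, hne⟩, by subst he₂; exact he⟩
  · exact ⟨⟨e, he₂⟩, rfl⟩

theorem eq_of_vMap_eq_of_indep (hφ : EpiCoessential φ) {v u : G.V} (hv : Indep G v)
    (hu : φ.vMap u = φ.vMap v) : u = v := by
  by_contra hne
  obtain ⟨hV, hE⟩ := (QuivHom.epi_iff_surjective φ).1 hφ.1
  apply G.not_epi_eraseVertexInc hv
  refine hφ.2 _ ((QuivHom.epi_iff_surjective _).2 ⟨fun w => ?_, hE⟩)
  obtain ⟨u', rfl⟩ := hV w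
  by_cases hu' : u' = v
  · exact ⟨⟨u, hne⟩, by subst hu'; exact hu⟩
  · exact ⟨⟨u', hu'⟩, rfl⟩

theorem indep_vMap (hφ : EpiCoessential φ) {v : G.V} (hv : Indep G v) :
    Indep H (φ.vMap v) := by
  obtain ⟨-, hE⟩ := (QuivHom.epi_iff_surjective φ).1 hφ.1
  constructor <;> intro f hf <;> obtain ⟨e, rfl⟩ := hE f
  · exact hv.1 e (hφ.eq_of_vMap_eq_of_indep hv ((φ.comm_s e).trans hf))
  · exact hv.2 e (hφ.eq_of_vMap_eq_of_indep hv ((φ.comm_t e).trans hf))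

end EpiCoessential

theorem epi_of_epi_comp_of_indep_unique {A G H : Quiv'} {φ : G ⟶ H} (α : A ⟶ G)
    (hE : Function.Injective φ.eMap) (hind : ∀ v : G.V, Indep G v → Indep H (φ.vMap v))
    (huniq : ∀ w : H.V, Indep H w → ∃! v : G.V, Indep G v ∧ φ.vMap v = w)
    (hαφ : Epi (α ≫ φ)) : Epi α := by
  obtain ⟨hV, hαE⟩ := (QuivHom.epi_iff_surjective _).1 hαφ
  have hαE : Function.Surjective α.eMap := fun e =>
    let ⟨a, ha⟩ := hαE (φ.eMap e)
    ⟨a, hE ha⟩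
  refine (QuivHom.epi_iff_surjective α).2 ⟨fun v => ?_, hαE⟩
  by_cases hv : Indep G v
  · obtain ⟨a, ha⟩ := hV (φ.vMap v)
    have ha' : Indep G (α.vMap a) := Indep.of_vMap φ (ha ▸ hind v hv)
    exact ⟨a, (huniq _ (hind v hv)).unique ⟨ha', ha⟩ ⟨hv, rfl⟩⟩
  · exact exists_vMap_eq_of_not_indep α hαE hv

theorem epi_coessential_iff (G H : Quiv') (φ : G ⟶ H) (hφ : CategoryTheory.Epi φ) :
    EpiCoessential φ ↔
      Function.Bijective φ.eMap ∧
      (∀ v : G.V, Indep G v → Indep H (φ.vMap v)) ∧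
      (∀ w : H.V, Indep H w → ∃! v : G.V, Indep G v ∧ φ.vMap v = w) := by
  obtain ⟨hV, hE⟩ := (QuivHom.epi_iff_surjective φ).1 hφ
  constructor
  · intro hc
    refine ⟨⟨hc.eMap_injective, hE⟩, fun v => hc.indep_vMap, fun w hw => ?_⟩
    obtain ⟨v, rfl⟩ := hV w
    exact ⟨v, ⟨Indep.of_vMap φ hw, rfl⟩,
      fun u ⟨hu, huv⟩ => (hc.eq_of_vMap_eq_of_indep hu huv.symm).symm⟩
  · rintro ⟨⟨hinj, -⟩, hind, huniq⟩
    exact ⟨hφ, fun A α => epi_of_epi_comp_of_indep_unique α hinj hind huniq⟩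
end

section
/- For any quiver G, the covering map p_G from the explosion X(G) = I(indep(G)) ⊔ M(E(G)) onto G is an epi-coessential epimorphism from an epi-projective quiver; hence X(G) with p_G is an epi-projective cover of G. -/
open CategoryTheory

/-!
The vertex and edge functors `V, E : Quiv → Set` have left adjoints `I`, `M` and right adjoints
`K`, `B`. So `V` and `E` preserve epimorphisms, which makes the epimorphisms of quivers exactly the
morphisms surjective on vertices and on edges, and `I`, `M` carry projective sets to projective
quivers: `I(S)`, `M(T)` and their disjoint union, the explosion, are projective. The covering map `p_G` is bijective on
edges and sends endpoints of edges to endpoints of edges: so if `α ≫ p_G` is surjective, `α` is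
surjective on edges, hence on endpoints of edges, and it hits the independent vertices because
only they can lie over independent vertices of `G`.
-/

def vertexAdjunction : Vf ⊣ Kf :=
  Adjunction.mkOfHomEquiv
    { homEquiv := fun G _ =>
        { toFun := fun f => ⟨f, fun e => (f (G.s e), f (G.t e)), fun _ => rfl, fun _ => rfl⟩
          invFun := fun φ => TypeCat.ofHom φ.vMap
          left_inv := fun _ => rfl
          right_inv := fun φ =>
            QuivHom.ext rfl (funext fun e => Prod.ext (φ.comm_s e) (φ.comm_t e)) }
      homEquiv_naturality_left_symm := fun _ _ => rfl
      homEquiv_naturality_right := fun _ _ => rfl }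

def edgeAdjunction : Ef ⊣ Bf :=
  Adjunction.mkOfHomEquiv
    { homEquiv := fun _ _ =>
        { toFun := fun f => ⟨fun _ => PUnit.unit, f, fun _ => rfl, fun _ => rfl⟩
          invFun := fun φ => TypeCat.ofHom φ.eMap
          left_inv := fun _ => rfl
          right_inv := fun _ => QuivHom.ext rfl rfl }
      homEquiv_naturality_left_symm := fun _ _ => rfl
      homEquiv_naturality_right := fun _ _ => rfl }

def independentVerticesAdjunction : If ⊣ Vf :=
  Adjunction.mkOfHomEquiv
    { homEquiv := fun _ _ =>
        { toFun := fun φ => TypeCat.ofHom φ.vMap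
          invFun := fun f => ⟨f, Empty.elim, fun e => e.elim, fun e => e.elim⟩
          left_inv := fun _ => QuivHom.ext rfl (funext fun e => e.elim)
          right_inv := fun _ => rfl }
      homEquiv_naturality_left_symm := fun _ _ => rfl
      homEquiv_naturality_right := fun _ _ => rfl }

def independentEdgesAdjunction : Mf ⊣ Ef :=
  Adjunction.mkOfHomEquiv
    { homEquiv := fun _ G =>
        { toFun := fun φ => TypeCat.ofHom φ.eMap
          invFun := fun f =>
            ⟨fun p => if p.1 = 0 then G.s (f p.2) else G.t (f p.2), f, fun _ => rfl, fun _ => rfl⟩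
          left_inv := fun φ => QuivHom.ext (funext fun ⟨i, x⟩ => by
            fin_cases i
            exacts [(φ.comm_s x).symm, (φ.comm_t x).symm]) rfl
          right_inv := fun _ => rfl }
      homEquiv_naturality_left_symm := fun _ _ => rfl
      homEquiv_naturality_right := fun _ _ => rfl }

instance : Vf.IsLeftAdjoint := vertexAdjunction.isLeftAdjoint

instance : Ef.IsLeftAdjoint := edgeAdjunction.isLeftAdjoint

@[ext]
theorem Quiv'.hom_ext {A B : Quiv'} {f g : A ⟶ B} (hV : f.vMap = g.vMap) (hE : f.eMap = g.eMap) :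
    f = g :=
  QuivHom.ext hV hE

theorem Quiv'.epi_iff_surjective {A B : Quiv'} (f : A ⟶ B) :
    Epi f ↔ Function.Surjective f.vMap ∧ Function.Surjective f.eMap := by
  refine ⟨fun _ => ⟨(CategoryTheory.epi_iff_surjective (Vf.map f)).1 inferInstance,
    (CategoryTheory.epi_iff_surjective (Ef.map f)).1 inferInstance⟩, fun ⟨hV, hE⟩ => ⟨?_⟩⟩
  intro Z g h hgh
  ext x
  · obtain ⟨a, rfl⟩ := hV x
    exact congrFun (congrArg QuivHom.vMap hgh) a
  · obtain ⟨a, rfl⟩ := hE x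
    exact congrFun (congrArg QuivHom.eMap hgh) a

theorem Quiv'.not_indep_iff {G : Quiv'} {v : G.V} : ¬ Indep G v ↔ ∃ e, G.s e = v ∨ G.t e = v := by
  simp only [Indep, ne_eq, not_and_or, not_forall, not_not, exists_or]

theorem QuivHom.mem_range_vMap_of_not_indep {A B : Quiv'} (f : A ⟶ B)
    (hE : Function.Surjective f.eMap) {v : B.V} (hv : ¬ Indep B v) : v ∈ Set.range f.vMap := by
  obtain ⟨e, he | he⟩ := Quiv'.not_indep_iff.1 hv <;> obtain ⟨a, rfl⟩ := hE e
  exacts [⟨A.s a, (f.comm_s a).trans he⟩, ⟨A.t a, (f.comm_t a).trans he⟩]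

theorem QuivHom.not_indep_map {A B : Quiv'} (f : A ⟶ B) {v : A.V} (hv : ¬ Indep A v) :
    ¬ Indep B (f.vMap v) := by
  obtain ⟨e, rfl | rfl⟩ := Quiv'.not_indep_iff.1 hv
  exacts [Quiv'.not_indep_iff.2 ⟨f.eMap e, Or.inl (f.comm_s e).symm⟩,
    Quiv'.not_indep_iff.2 ⟨f.eMap e, Or.inr (f.comm_t e).symm⟩]

section DisjointUnion

variable {P Q X : Quiv'}

def DU.inl : P ⟶ DU P Q := ⟨Sum.inl, Sum.inl, fun _ => rfl, fun _ => rfl⟩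

def DU.inr : Q ⟶ DU P Q := ⟨Sum.inr, Sum.inr, fun _ => rfl, fun _ => rfl⟩

def DU.desc (f : P ⟶ X) (g : Q ⟶ X) : DU P Q ⟶ X where
  vMap := Sum.elim f.vMap g.vMap
  eMap := Sum.elim f.eMap g.eMap
  comm_s := by rintro (e | e); exacts [f.comm_s e, g.comm_s e]
  comm_t := by rintro (e | e); exacts [f.comm_t e, g.comm_t e]

@[simp]
theorem DU.inl_desc (f : P ⟶ X) (g : Q ⟶ X) : DU.inl ≫ DU.desc f g = f := rfl

@[simp]
theorem DU.inr_desc (f : P ⟶ X) (g : Q ⟶ X) : DU.inr ≫ DU.desc f g = g := rfl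

theorem DU.hom_ext {f g : DU P Q ⟶ X} (hl : DU.inl ≫ f = DU.inl ≫ g)
    (hr : DU.inr ≫ f = DU.inr ≫ g) : f = g := by
  ext (x | x)
  exacts [congrFun (congrArg QuivHom.vMap hl) x, congrFun (congrArg QuivHom.vMap hr) x,
    congrFun (congrArg QuivHom.eMap hl) x, congrFun (congrArg QuivHom.eMap hr) x]

theorem EpiProjective.du (hP : EpiProjective P) (hQ : EpiProjective Q) :
    EpiProjective (DU P Q) := by
  intro A B φ hφ ψ
  obtain ⟨γP, hγP⟩ := hP φ hφ (DU.inl ≫ ψ)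
  obtain ⟨γQ, hγQ⟩ := hQ φ hφ (DU.inr ≫ ψ)
  refine ⟨DU.desc γP γQ, DU.hom_ext ?_ ?_⟩
  · rw [← Category.assoc, DU.inl_desc, hγP]
  · rw [← Category.assoc, DU.inr_desc, hγQ]

end DisjointUnion

theorem EpiProjective.of_projective (P : Quiv') [Projective P] : EpiProjective P :=
  fun _ _ φ _ ψ => Projective.factors ψ φ

theorem epiProjective_IQ (S : Type) : EpiProjective (IQ S) :=
  have := independentVerticesAdjunction.map_projective S inferInstance
  EpiProjective.of_projective (If.obj S)

theorem epiProjective_MQ (S : Type) : EpiProjective (MQ S) :=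
  have := independentEdgesAdjunction.map_projective S inferInstance
  EpiProjective.of_projective (Mf.obj S)

section Explosion

variable (G : Quiv')

theorem coverMap_eMap_bijective : Function.Bijective (coverMap G).eMap :=
  Function.bijective_iff_has_inverse.2
    ⟨Sum.inr, by rintro (e | e); exacts [e.elim, rfl], fun _ => rfl⟩

theorem coverMap_vMap_surjective : Function.Surjective (coverMap G).vMap := by
  intro v
  by_cases hv : Indep G v
  · exact ⟨Sum.inl ⟨v, hv⟩, rfl⟩
  · exact (coverMap G).mem_range_vMap_of_not_indep (coverMap_eMap_bijective G).2 hv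

theorem coverMap_epi : Epi (coverMap G) :=
  (Quiv'.epi_iff_surjective _).2 ⟨coverMap_vMap_surjective G, (coverMap_eMap_bijective G).2⟩

variable {G}

theorem explosion_not_indep_inr (p : Fin 2 × G.E) : ¬ Indep (Explosion G) (Sum.inr p) := by
  obtain ⟨i, e⟩ := p
  fin_cases i
  exacts [fun h => h.1 (Sum.inr e) rfl, fun h => h.2 (Sum.inr e) rfl]

theorem eq_inl_of_coverMap_vMap_eq {x : (Explosion G).V} {v : {v : G.V // Indep G v}}
    (h : (coverMap G).vMap x = v) : x = Sum.inl v := by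
  rcases x with w | p
  · exact congrArg Sum.inl (Subtype.ext h)
  · exact absurd (h ▸ v.2) ((coverMap G).not_indep_map (explosion_not_indep_inr p))

theorem coverMap_epiCoessential : EpiCoessential (coverMap G) := by
  refine ⟨coverMap_epi G, fun A α hα => ?_⟩
  obtain ⟨hV, hE⟩ := (Quiv'.epi_iff_surjective _).1 hα
  have hαE : Function.Surjective α.eMap :=
    (Function.Surjective.of_comp_iff' (coverMap_eMap_bijective G) _).1 hE
  refine (Quiv'.epi_iff_surjective α).2 ⟨?_, hαE⟩
  rintro (v | p)
  · obtain ⟨a, ha⟩ := hV v.1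
    exact ⟨a, eq_inl_of_coverMap_vMap_eq ha⟩
  · exact α.mem_range_vMap_of_not_indep hαE (explosion_not_indep_inr p)

end Explosion

theorem explosion_is_projective_cover (G : Quiv') :
    CategoryTheory.Epi (coverMap G) ∧ EpiCoessential (coverMap G) ∧
      EpiProjective (Explosion G) :=
  ⟨coverMap_epi G, coverMap_epiCoessential, (epiProjective_IQ _).du (epiProjective_MQ _)⟩
end
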